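/- For a Van der Corput set C_w with w = 2^c, the points of C_w whose y-coordinates lie in the same canonical interval [a·2^{c-b}, (a+1)·2^{c-b}), i.e. whose y-coordinates agree on their b most significant bits, have x-coordinates forming exactly the arithmetic progression {x0, x0 + 2^b, x0 + 2·2^b, ...} ∩ {0,...,w-1} for some x0 ∈ {0,...,2^b - 1}. -/

import Mathlib

open Finset

/-- Bit-reversing function. -/
def bitRev (c z : ℕ) : ℕ := ∑ i ∈ Finset.range c, (z / 2 ^ i % 2) * 2 ^ (c - 1 - i)

lemma sum_digit_eq_mod (x n : ℕ) :
    ∑ i ∈ range n, (x / 2 ^ i % 2) * 2 ^ i = x % 2 ^ n := by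
  induction n with
  | zero => simp [Nat.mod_one]
  | succ n ih =>
      rw [Finset.sum_range_succ, ih, pow_succ, Nat.mod_mul]
      ring

lemma digit_of_sum (d : ℕ → ℕ) (hd : ∀ i, d i ≤ 1) (n j : ℕ) (hj : j < n) :
    (∑ i ∈ range n, d i * 2 ^ i) / 2 ^ j % 2 = d j := by
  have hsplit : ∑ i ∈ range n, d i * 2 ^ i =
      (∑ i ∈ range j, d i * 2 ^ i) + d j * 2 ^ j +
        ∑ i ∈ Finset.Ico (j + 1) n, d i * 2 ^ i := by
    rw [Finset.range_eq_Ico, ← Finset.sum_Ico_consecutive _ (Nat.zero_le (j+1)) hj,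
      ← Finset.range_eq_Ico, Finset.sum_range_succ]
  have hlow : (∑ i ∈ range j, d i * 2 ^ i) < 2 ^ j := by
    calc (∑ i ∈ range j, d i * 2 ^ i) ≤ ∑ i ∈ range j, 1 * 2 ^ i := by
          apply Finset.sum_le_sum
          intro i _
          exact Nat.mul_le_mul_right _ (hd i)
      _ = 2 ^ j - 1 := by
          simp [Nat.geomSum_eq]
      _ < 2 ^ j := by
          have : 0 < 2 ^ j := Nat.pow_pos (by norm_num)
          omega
  have hhigh : ∑ i ∈ Finset.Ico (j + 1) n, d i * 2 ^ i =
      2 ^ (j + 1) * ∑ i ∈ Finset.Ico (j + 1) n, d i * 2 ^ (i - (j + 1)) := by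
    rw [Finset.mul_sum]
    apply Finset.sum_congr rfl
    intro i hi
    have hi' := (Finset.mem_Ico.mp hi).1
    have : 2 ^ i = 2 ^ (j + 1) * 2 ^ (i - (j + 1)) := by
      rw [← pow_add]
      congr 1
      omega
    rw [this]; ring
  rw [hsplit, hhigh]
  set L := ∑ i ∈ range j, d i * 2 ^ i
  set T := ∑ i ∈ Finset.Ico (j + 1) n, d i * 2 ^ (i - (j + 1))
  have h2 : (2:ℕ) ^ (j+1) = 2 ^ j * 2 := by ring
  have : L + d j * 2 ^ j + 2 ^ (j + 1) * T = L + 2 ^ j * (d j + 2 * T) := by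
    rw [h2]; ring
  rw [this, Nat.add_mul_div_left _ _ (by positivity : 0 < 2 ^ j),
    Nat.div_eq_of_lt hlow]
  have := hd j
  omega

lemma bitRev_reflect (c z : ℕ) :
    bitRev c z = ∑ j ∈ range c, (z / 2 ^ (c - 1 - j) % 2) * 2 ^ j := by
  rw [bitRev, ← Finset.sum_range_reflect (fun j => (z / 2 ^ (c - 1 - j) % 2) * 2 ^ j) c]
  apply Finset.sum_congr rfl
  intro i hi
  have hi' := Finset.mem_range.mp hi
  have h : c - 1 - (c - 1 - i) = i := by omega
  simp only [h]

lemma bitRev_lt (n z : ℕ) : bitRev n z < 2 ^ n := by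
  rw [bitRev_reflect]
  calc ∑ j ∈ range n, (z / 2 ^ (n - 1 - j) % 2) * 2 ^ j
      ≤ ∑ j ∈ range n, 1 * 2 ^ j := by
        apply Finset.sum_le_sum
        intro i _
        exact Nat.mul_le_mul_right _ (Nat.le_of_lt_succ (Nat.mod_lt _ (by norm_num)))
    _ = 2 ^ n - 1 := by simp [Nat.geomSum_eq]
    _ < 2 ^ n := by
        have : 0 < 2 ^ n := Nat.pow_pos (by norm_num)
        omega

lemma bitRev_digit (n z j : ℕ) (hj : j < n) :
    bitRev n z / 2 ^ j % 2 = z / 2 ^ (n - 1 - j) % 2 := by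
  rw [bitRev_reflect]
  exact digit_of_sum _ (fun i => Nat.le_of_lt_succ (Nat.mod_lt _ (by norm_num))) n j hj

lemma bitRev_involution (n a : ℕ) (ha : a < 2 ^ n) : bitRev n (bitRev n a) = a := by
  rw [bitRev]
  have : ∑ i ∈ range n, (bitRev n a / 2 ^ i % 2) * 2 ^ (n - 1 - i) =
      ∑ i ∈ range n, (a / 2 ^ (n - 1 - i) % 2) * 2 ^ (n - 1 - i) := by
    apply Finset.sum_congr rfl
    intro i hi
    rw [bitRev_digit n a i (Finset.mem_range.mp hi)]
  rw [this, Finset.sum_range_reflect (fun k => (a / 2 ^ k % 2) * 2 ^ k) n]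
  rw [sum_digit_eq_mod, Nat.mod_eq_of_lt ha]

lemma bitRev_div (c b q : ℕ) (hb : b ≤ c) :
    bitRev c q / 2 ^ (c - b) = bitRev b (q % 2 ^ b) := by
  have hbit : ∀ i < b, q % 2 ^ b / 2 ^ i % 2 = q / 2 ^ i % 2 := by
    intro i hi
    have : (2:ℕ) ^ b = 2 ^ i * 2 ^ (b - i) := by rw [← pow_add]; congr 1; omega
    rw [this, Nat.mod_mul_right_div_self, Nat.mod_mod_of_dvd]
    exact dvd_pow_self 2 (by omega)
  have hsplit : bitRev c q =
      2 ^ (c - b) * (∑ i ∈ range b, (q / 2 ^ i % 2) * 2 ^ (b - 1 - i)) +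
        ∑ i ∈ Finset.Ico b c, (q / 2 ^ i % 2) * 2 ^ (c - 1 - i) := by
    rw [bitRev, Finset.range_eq_Ico, ← Finset.sum_Ico_consecutive _ (Nat.zero_le b) hb,
      ← Finset.range_eq_Ico, Finset.mul_sum]
    congr 1
    apply Finset.sum_congr rfl
    intro i hi
    have hi' := Finset.mem_range.mp hi
    have : (2:ℕ) ^ (c - 1 - i) = 2 ^ (c - b) * 2 ^ (b - 1 - i) := by
      rw [← pow_add]; congr 1; omega
    rw [this]; ring
  have hrem : ∑ i ∈ Finset.Ico b c, (q / 2 ^ i % 2) * 2 ^ (c - 1 - i) < 2 ^ (c - b) := by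
    calc ∑ i ∈ Finset.Ico b c, (q / 2 ^ i % 2) * 2 ^ (c - 1 - i)
        ≤ ∑ i ∈ Finset.Ico b c, 1 * 2 ^ (c - 1 - i) := by
          apply Finset.sum_le_sum
          intro i _
          exact Nat.mul_le_mul_right _ (Nat.le_of_lt_succ (Nat.mod_lt _ (by norm_num)))
      _ = ∑ j ∈ range (c - b), 2 ^ j := by
          simp only [one_mul]
          rw [Finset.sum_Ico_eq_sum_range,
            ← Finset.sum_range_reflect (fun j => (2:ℕ) ^ j) (c - b)]
          apply Finset.sum_congr rfl
          intro j hj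
          have := Finset.mem_range.mp hj
          congr 1
          omega
      _ = 2 ^ (c - b) - 1 := by simp [Nat.geomSum_eq]
      _ < 2 ^ (c - b) := by
          have : 0 < 2 ^ (c - b) := Nat.pow_pos (by norm_num)
          omega
  rw [hsplit, Nat.mul_add_div (by positivity), Nat.div_eq_of_lt hrem, Nat.add_zero]
  rw [bitRev]
  apply Finset.sum_congr rfl
  intro i hi
  rw [hbit i (Finset.mem_range.mp hi)]

/-- The points of the Van der Corput set `C_w` (`w = 2^c`) whose `y`-coordinates agree
on their `b` most significant bits (i.e. `f_w(q) / 2^(c-b) = a`) have `x`-coordinates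
forming exactly the arithmetic progression `{x₀, x₀+2^b, x₀+2·2^b, ...} ∩ {0,...,w-1}`
for some `x₀ ∈ {0,...,2^b - 1}`. -/
theorem vdc_column_structure (c b a : ℕ) (hc : 0 < c) (hb : b ≤ c) (ha : a < 2 ^ b) :
    ∃ x0 < 2 ^ b, ∀ q : ℕ,
      (q < 2 ^ c ∧ bitRev c q / 2 ^ (c - b) = a) ↔ (q < 2 ^ c ∧ q % 2 ^ b = x0) := by
  refine ⟨bitRev b a, bitRev_lt b a, fun q => ?_⟩
  rw [bitRev_div c b q hb]
  constructor
  · rintro ⟨hq, h⟩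
    refine ⟨hq, ?_⟩
    rw [← h, bitRev_involution b _ (Nat.mod_lt _ (by positivity))]
  · rintro ⟨hq, h⟩
    exact ⟨hq, by rw [h, bitRev_involution b a ha]⟩
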